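/- arXiv:2604.03745 — 2 statements merged into one kernel-verified Lean document; each statement's English description precedes it below -/
import Mathlib

section
/- Let X be a set, h : X → ℝ a function, ℓ ≥ 1, and let φ_1,…,φ_ℓ : X → X be maps with associated real numbers d_1,…,d_ℓ, each d_i ≥ 2. Suppose C ≥ 0 satisfies |h(φ_i(x))/d_i − h(x)| ≤ C for all x ∈ X and all 1 ≤ i ≤ ℓ. Then for every sequence γ = (γ_m)_{m≥1} with γ_m ∈ {1,…,ℓ} and every x ∈ X: (a) the limit ĥ_γ(x) = lim_{n→∞} h(φ_{γ_n} ∘ ⋯ ∘ φ_{γ_1}(x)) / (d_{γ_1}·d_{γ_2}⋯d_{γ_n}) exists; (b) ĥ_{γ'}(φ_{γ_1}(x)) = d_{γ_1}·ĥ_γ(x), where γ' = (γ_{m+1})_{m≥1} is the shifted sequence; and (c) |ĥ_γ(x) − h(x)| ≤ C/(1 − 1/min_{1≤i≤ℓ} d_i). -/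
open scoped BigOperators

noncomputable section

/-- A family of pairwise inequivalent nontrivial absolute values on a field `k`
with finite support satisfying the product formula.  For a number field `k` such a
family is, up to a common positive power, the canonically normalized family of all
places of `k` (by the Artin–Whaples theorem), so that `M.V` plays the role of the
set `M_k` of places of `k`. -/
structure PlaceFamily (k : Type) [Field k] where
  V : Type
  av : V → AbsoluteValue k ℝ
  nontriv : ∀ v : V, ∃ x : k, x ≠ 0 ∧ av v x ≠ 1
  pairwise_inequiv : ∀ v w : V, v ≠ w → ¬∃ t : ℝ, 0 < t ∧ ∀ x : k, av w x = av v x ^ t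
  finite_support : ∀ x : k, x ≠ 0 → {v : V | av v x ≠ 1}.Finite
  product_formula : ∀ x : k, x ≠ 0 → (∑ᶠ v : V, Real.log (av v x)) = 0

namespace PlaceFamily

variable {k : Type} [Field k]

/-- The place `v` is nonarchimedean; the archimedean places are those which are not. -/
def NonarchAt (M : PlaceFamily k) (v : M.V) : Prop :=
  ∀ x y : k, M.av v (x + y) ≤ max (M.av v x) (M.av v y)

/-- `max_j |a_j|_v` for a tuple of homogeneous coordinates. -/
def maxAbs (M : PlaceFamily k) {N : ℕ} (v : M.V) (a : Fin (N + 1) → k) : ℝ :=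
  Finset.univ.sup' ⟨0, Finset.mem_univ 0⟩ fun j => M.av v (a j)

/-- The Weil height `h(P) = ∑_v log max_j |a_j|_v` of a point of `ℙ^N(k)` given by
homogeneous coordinates. -/
def height (M : PlaceFamily k) {N : ℕ} (a : Fin (N + 1) → k) : ℝ :=
  ∑ᶠ v : M.V, Real.log (M.maxAbs v a)

/-- The local height `λ_v(D_I, P) = ∑_{i ∈ I} log (max_j |a_j|_v / |a_i|_v)` relative to
the divisor `D_I = ∑_{i ∈ I} (X_i = 0)`. -/
def localHt (M : PlaceFamily k) {N : ℕ} (I : Finset (Fin (N + 1))) (v : M.V)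
    (a : Fin (N + 1) → k) : ℝ :=
  ∑ i ∈ I, Real.log (M.maxAbs v a / M.av v (a i))

/-- `∑_{v ∉ S} λ_v(D_I, ·)`. -/
def sumOutside (M : PlaceFamily k) {N : ℕ} (I : Finset (Fin (N + 1))) (S : Set M.V)
    (a : Fin (N + 1) → k) : ℝ :=
  ∑ᶠ v ∈ Sᶜ, M.localHt I v a

end PlaceFamily

variable {k : Type} [Field k]

/-- Two coordinate tuples represent the same point of projective space. -/
def projEq (k : Type) [Field k] {n : ℕ} (a b : Fin n → k) : Prop :=
  ∃ t : k, t ≠ 0 ∧ b = t • a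

/-- A proper Zariski-closed subset of `ℙ^N`, described on homogeneous coordinates:
the common zero locus of a family of homogeneous polynomials which is avoided by
some point of `ℙ^N(k)`. -/
def IsZariskiClosedProper {N : ℕ} (Z : Set (Fin (N + 1) → k)) : Prop :=
  (∃ 𝒢 : Set (MvPolynomial (Fin (N + 1)) k),
      (∀ G ∈ 𝒢, ∃ d : ℕ, G.IsHomogeneous d) ∧
        Z = {a : Fin (N + 1) → k | ∀ G ∈ 𝒢, MvPolynomial.eval a G = 0}) ∧
    ∃ a : Fin (N + 1) → k, a ≠ 0 ∧ a ∉ Z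

/-- An endomorphism of `ℙ^N` of degree `deg` defined over `k`: it is given by `N + 1`
homogeneous polynomials of degree `deg` with no common zero other than the origin over
an algebraic closure of `k`. -/
structure ProjEndo (k : Type) [Field k] (N : ℕ) where
  deg : ℕ
  coord : Fin (N + 1) → MvPolynomial (Fin (N + 1)) k
  homogeneous : ∀ j, (coord j).IsHomogeneous deg
  no_common_zero :
    ∀ x : Fin (N + 1) → AlgebraicClosure k,
      (∀ j, MvPolynomial.eval x
        (MvPolynomial.map (algebraMap k (AlgebraicClosure k)) (coord j)) = 0) → x = 0

/-- Action of an endomorphism on homogeneous coordinates. -/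
def ProjEndo.app {N : ℕ} (φ : ProjEndo k N) (a : Fin (N + 1) → k) : Fin (N + 1) → k :=
  fun j => MvPolynomial.eval a (φ.coord j)

/-- The element of the semigroup `𝓕` generated by `φ 0, …, φ (ℓ-1)` corresponding to a
word in the generators, acting on homogeneous coordinates; the empty word is the
identity, so that words `≠ []` represent the elements of `𝓕 ∖ {id}`. -/
def wordApp {N ℓ : ℕ} (φ : Fin ℓ → ProjEndo k N) :
    List (Fin ℓ) → (Fin (N + 1) → k) → Fin (N + 1) → k
  | [] => fun a => a
  | i :: w => fun a => (φ i).app (wordApp φ w a)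

/-- The (multiplicative) degree of the element of `𝓕` given by a word. -/
def wordDeg {N ℓ : ℕ} (φ : Fin ℓ → ProjEndo k N) (w : List (Fin ℓ)) : ℕ :=
  (w.map fun i => (φ i).deg).prod

/-- Coordinate polynomials of the composition along a word. -/
def wordPoly {N ℓ : ℕ} (φ : Fin ℓ → ProjEndo k N) :
    List (Fin ℓ) → Fin (N + 1) → MvPolynomial (Fin (N + 1)) k
  | [] => fun j => MvPolynomial.X j
  | i :: w => fun j => MvPolynomial.bind₁ (wordPoly φ w) ((φ i).coord j)

/-- Iterates of a single endomorphism acting on homogeneous coordinates. -/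
def iterApp {N : ℕ} (f : ProjEndo k N) : ℕ → (Fin (N + 1) → k) → Fin (N + 1) → k
  | 0 => fun a => a
  | n + 1 => fun a => f.app (iterApp f n a)

/-- Homogeneous coordinates `[1 : u_1 : ⋯ : u_N]` of an element of `𝔾_m^N(k) ⊆ ℙ^N(k)`. -/
def unitCoords {N : ℕ} (u : Fin N → kˣ) : Fin (N + 1) → k :=
  Fin.cons 1 fun i => (u i : k)

/-- The multiplicative relation `a^r = u ⬝ b^s` between the points of `ℙ^N(k)` with
homogeneous coordinates `a` and `b`, where `u ∈ 𝔾_m^N(k)`. -/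
def MultRel {N : ℕ} (a b : Fin (N + 1) → k) (r s : ℤ) (u : Fin N → kˣ) : Prop :=
  ∃ t : k, t ≠ 0 ∧ ∀ j, a j ^ r = t * unitCoords u j * b j ^ s

/-- Hypothesis `(Hyp_ε)` for the divisor `D_I`, instantiated at the finite set `S` of
places and the Zariski-closed set `Z = Z_{ε,D,S}`: every point `φ(P)` with
`φ ∈ 𝓕 ∖ {id}`, `φ(P) ∉ |D_I|` and `∑_{v ∉ S} λ_v(D_I, φ(P)) < ε·h(D_I, φ(P))`
lies in `Z`.  (Here `h(D_I, ·) = #I · h(·)`.) -/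
def HypAt {N ℓ : ℕ} (M : PlaceFamily k) (φ : Fin ℓ → ProjEndo k N) (ε : ℝ)
    (I : Finset (Fin (N + 1))) (S : Set M.V) (Z : Set (Fin (N + 1) → k)) : Prop :=
  ∀ a : Fin (N + 1) → k, a ≠ 0 → ∀ w : List (Fin ℓ), w ≠ [] →
    (∀ i ∈ I, wordApp φ w a i ≠ 0) →
    M.sumOutside I S (wordApp φ w a) < ε * ((I.card : ℝ) * M.height (wordApp φ w a)) →
    wordApp φ w a ∈ Z

/-- Hypothesis `(Hyp_ε)` for the semigroup generated by a single map. -/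
def HypIter {N : ℕ} (M : PlaceFamily k) (f : ProjEndo k N) (ε : ℝ)
    (I : Finset (Fin (N + 1))) (S : Set M.V) (Z : Set (Fin (N + 1) → k)) : Prop :=
  ∀ a : Fin (N + 1) → k, a ≠ 0 → ∀ n : ℕ, 1 ≤ n →
    (∀ i ∈ I, iterApp f n a i ≠ 0) →
    M.sumOutside I S (iterApp f n a) < ε * ((I.card : ℝ) * M.height (iterApp f n a)) →
    iterApp f n a ∈ Z

/-- The linear form with coefficient vector `c`. -/
def linForm {N : ℕ} (c : Fin (N + 1) → k) : MvPolynomial (Fin (N + 1)) k :=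
  ∑ j : Fin (N + 1), MvPolynomial.C (c j) * MvPolynomial.X j

/-- A family of linear forms (given by coefficient vectors) is in general position if
any `N + 1` of them are linearly independent. -/
def InGeneralPosition {N q : ℕ} (L : Fin q → Fin (N + 1) → k) : Prop :=
  ∀ T : Finset (Fin q), T.card = N + 1 → LinearIndependent k fun t : T => L t.1

/-- The local height `λ_v(D, P) = log ((max_j |a_j|_v)^{deg G} / |G(a)|_v)` relative to
the hypersurface `D = (G = 0)`, `G` homogeneous of degree `e`. -/
def lamG (M : PlaceFamily k) {N : ℕ} (G : MvPolynomial (Fin (N + 1)) k) (e : ℕ)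
    (v : M.V) (a : Fin (N + 1) → k) : ℝ :=
  Real.log (M.maxAbs v a ^ e / M.av v (MvPolynomial.eval a G))

/-- Composition of an abstract word of self-maps; the empty word is the identity. -/
def compWord {X : Type*} {ℓ : ℕ} (φ : Fin ℓ → X → X) : List (Fin ℓ) → X → X
  | [] => fun x => x
  | i :: w => fun x => φ i (compWord φ w x)

/-- The partial composition `φ_{γ_{n-1}} ∘ ⋯ ∘ φ_{γ_0}` along an infinite word `γ`. -/
def seqComp {X : Type*} {ℓ : ℕ} (φ : Fin ℓ → X → X) (γ : ℕ → Fin ℓ) : ℕ → X → X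
  | 0 => fun x => x
  | n + 1 => fun x => φ (γ n) (seqComp φ γ n x)

end

/-!
Write `P_n = d_{γ_0} ⋯ d_{γ_{n-1}}` and `y_n = φ_{γ_{n-1}} ∘ ⋯ ∘ φ_{γ_0}(x)`. Consecutive terms
of `h(y_n)/P_n` differ by `(h(φ_{γ_n} y_n)/d_{γ_n} − h(y_n))/P_n`, which is at most `C/D^n`
for any `1 < D ≤ min_i d_i`. So the sequence is Cauchy with geometric rate, its limit lies
within `C/(1 − 1/D)` of its initial term `h(x)`, and dropping the first map of the word
rescales the sequence by `d_{γ_0}`.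
-/
open Filter Topology

section TateLimit

variable {X : Type*} (h : X → ℝ) {ℓ : ℕ} (φ : Fin ℓ → X → X) (d : Fin ℓ → ℝ)

theorem seqComp_succ_eq_seqComp_shift (γ : ℕ → Fin ℓ) (x : X) (n : ℕ) :
    seqComp φ γ (n + 1) x = seqComp φ (fun m => γ (m + 1)) n (φ (γ 0) x) := by
  induction n with
  | zero => rfl
  | succ n ih => simp only [seqComp] at ih ⊢; rw [ih]

noncomputable def tateSeq (γ : ℕ → Fin ℓ) (x : X) (n : ℕ) : ℝ :=
  h (seqComp φ γ n x) / ∏ m ∈ Finset.range n, d (γ m)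

noncomputable def canonicalHeight (γ : ℕ → Fin ℓ) (x : X) : ℝ :=
  limUnder atTop (tateSeq h φ d γ x)

theorem tateSeq_zero (γ : ℕ → Fin ℓ) (x : X) : tateSeq h φ d γ x 0 = h x := by
  simp [tateSeq, seqComp]

variable {h φ d}

theorem tateSeq_shift (hd : ∀ i, d i ≠ 0) (γ : ℕ → Fin ℓ) (x : X) (n : ℕ) :
    tateSeq h φ d (fun m => γ (m + 1)) (φ (γ 0) x) n =
      d (γ 0) * tateSeq h φ d γ x (n + 1) := by
  have hprod : ∏ m ∈ Finset.range n, d (γ (m + 1)) ≠ 0 :=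
    Finset.prod_ne_zero_iff.mpr fun m _ => hd _
  rw [tateSeq, tateSeq, seqComp_succ_eq_seqComp_shift, Finset.prod_range_succ']
  field_simp [hd (γ 0)]

theorem tateSeq_succ_sub (hd : ∀ i, d i ≠ 0) (γ : ℕ → Fin ℓ) (x : X) (n : ℕ) :
    tateSeq h φ d γ x (n + 1) - tateSeq h φ d γ x n =
      (h (φ (γ n) (seqComp φ γ n x)) / d (γ n) - h (seqComp φ γ n x)) /
        ∏ m ∈ Finset.range n, d (γ m) := by
  have hprod : ∏ m ∈ Finset.range n, d (γ m) ≠ 0 :=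
    Finset.prod_ne_zero_iff.mpr fun m _ => hd _
  simp only [tateSeq, seqComp, Finset.prod_range_succ]
  field_simp [hd (γ n)]

variable {D C : ℝ}

theorem pow_le_prod_range (hD : 0 ≤ D) (hDd : ∀ i, D ≤ d i) (γ : ℕ → Fin ℓ) (n : ℕ) :
    D ^ n ≤ ∏ m ∈ Finset.range n, d (γ m) := by
  simpa using
    Finset.prod_le_prod (s := Finset.range n) (fun _ _ => hD) fun m _ => hDd (γ m)

theorem dist_tateSeq_succ_le (hD : 0 < D) (hDd : ∀ i, D ≤ d i)
    (hcomp : ∀ (x : X) (i : Fin ℓ), |h (φ i x) / d i - h x| ≤ C)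
    (γ : ℕ → Fin ℓ) (x : X) (n : ℕ) :
    dist (tateSeq h φ d γ x n) (tateSeq h φ d γ x (n + 1)) ≤ C * (1 / D) ^ n := by
  have hd : ∀ i, d i ≠ 0 := fun i => (hD.trans_le (hDd i)).ne'
  have hC : 0 ≤ C := (abs_nonneg _).trans (hcomp x (γ 0))
  have hDn : 0 < D ^ n := pow_pos hD n
  have hprod := pow_le_prod_range hD.le hDd γ n
  rw [dist_comm, Real.dist_eq, tateSeq_succ_sub hd, abs_div, abs_of_pos (hDn.trans_le hprod)]
  calc _ ≤ C / ∏ m ∈ Finset.range n, d (γ m) :=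
        div_le_div_of_nonneg_right (hcomp _ _) (hDn.le.trans hprod)
    _ ≤ C / D ^ n := div_le_div_of_nonneg_left hC hDn hprod
    _ = C * (1 / D) ^ n := by rw [one_div_pow, mul_one_div]

variable (hD : 1 < D) (hDd : ∀ i, D ≤ d i)
  (hcomp : ∀ (x : X) (i : Fin ℓ), |h (φ i x) / d i - h x| ≤ C)
include hD hDd hcomp

theorem tendsto_tateSeq_canonicalHeight (γ : ℕ → Fin ℓ) (x : X) :
    Tendsto (tateSeq h φ d γ x) atTop (𝓝 (canonicalHeight h φ d γ x)) :=
  (cauchySeq_of_le_geometric _ C ((div_lt_one (by linarith)).mpr hD)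
    (dist_tateSeq_succ_le (by linarith) hDd hcomp γ x)).tendsto_limUnder

theorem canonicalHeight_shift (γ : ℕ → Fin ℓ) (x : X) :
    canonicalHeight h φ d (fun m => γ (m + 1)) (φ (γ 0) x) =
      d (γ 0) * canonicalHeight h φ d γ x := by
  have hd : ∀ i, d i ≠ 0 := fun i => (zero_lt_one.trans (hD.trans_le (hDd i))).ne'
  refine tendsto_nhds_unique (tendsto_tateSeq_canonicalHeight hD hDd hcomp _ _) ?_
  have hlim := tendsto_tateSeq_canonicalHeight hD hDd hcomp γ x
  exact ((hlim.comp (tendsto_add_atTop_nat 1)).const_mul (d (γ 0))).congr fun n =>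
    (tateSeq_shift hd γ x n).symm

theorem abs_canonicalHeight_sub_le (γ : ℕ → Fin ℓ) (x : X) :
    |canonicalHeight h φ d γ x - h x| ≤ C / (1 - 1 / D) := by
  rw [abs_sub_comm, ← Real.dist_eq, ← tateSeq_zero h φ d γ x]
  exact dist_le_of_le_geometric_of_tendsto₀ _ C ((div_lt_one (by linarith)).mpr hD)
    (dist_tateSeq_succ_le (by linarith) hDd hcomp γ x)
    (tendsto_tateSeq_canonicalHeight hD hDd hcomp γ x)

end TateLimit

theorem canonical_height_for_infinite_words_general
    {X : Type*} (h : X → ℝ) {ℓ : ℕ} (hl : 1 ≤ ℓ)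
    (φ : Fin ℓ → X → X) (d : Fin ℓ → ℝ) (hd : ∀ i, 2 ≤ d i)
    (C : ℝ)
    (hcomp : ∀ (x : X) (i : Fin ℓ), |h (φ i x) / d i - h x| ≤ C) :
    ∃ hhat : (ℕ → Fin ℓ) → X → ℝ,
      (∀ (γ : ℕ → Fin ℓ) (x : X),
        Filter.Tendsto
          (fun n => h (seqComp φ γ n x) / ∏ m ∈ Finset.range n, d (γ m))
          Filter.atTop (nhds (hhat γ x))) ∧
      (∀ (γ : ℕ → Fin ℓ) (x : X),
        hhat (fun m => γ (m + 1)) (φ (γ 0) x) = d (γ 0) * hhat γ x) ∧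
      (∀ (γ : ℕ → Fin ℓ) (x : X),
        |hhat γ x - h x| ≤
          C / (1 - 1 /
            Finset.univ.inf' (Finset.univ_nonempty_iff.mpr (Fin.pos_iff_nonempty.mp hl)) d)) := by
  set D := Finset.univ.inf' (Finset.univ_nonempty_iff.mpr (Fin.pos_iff_nonempty.mp hl)) d
  have hDd : ∀ i, D ≤ d i := fun i => Finset.inf'_le _ (Finset.mem_univ i)
  have hD : 1 < D := by
    have : 2 ≤ D := Finset.le_inf' _ _ fun i _ => hd i
    linarith
  exact ⟨canonicalHeight h φ d, tendsto_tateSeq_canonicalHeight hD hDd hcomp,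
    canonicalHeight_shift hD hDd hcomp, abs_canonicalHeight_sub_le hD hDd hcomp⟩

/-- **Canonical heights for infinite words (Tate limit construction).**
If `h : X → ℝ` and `φ_1, …, φ_ℓ : X → X` have "degrees" `d_i ≥ 2` with
`|h(φ_i x)/d_i − h x| ≤ C` for all `x, i`, then there is a canonical height
`ĥ : (infinite words γ) → X → ℝ` such that:
(a) for every `γ` and `x`, `h(φ_{γ_{n-1}} ∘ ⋯ ∘ φ_{γ_0}(x)) / (d_{γ_0} ⋯ d_{γ_{n-1}})`
converges to `ĥ γ x` as `n → ∞`;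
(b) `ĥ γ' (φ_{γ_0} x) = d_{γ_0} · ĥ γ x` where `γ'` is the shift of `γ`; and
(c) `|ĥ γ x − h x| ≤ C / (1 − 1/min_i d_i)`, uniformly in `γ`. -/
theorem canonical_height_for_infinite_words
    {X : Type*} (h : X → ℝ) {ℓ : ℕ} (hl : 1 ≤ ℓ)
    (φ : Fin ℓ → X → X) (d : Fin ℓ → ℝ) (hd : ∀ i, 2 ≤ d i)
    (C : ℝ) (hC : 0 ≤ C)
    (hcomp : ∀ (x : X) (i : Fin ℓ), |h (φ i x) / d i - h x| ≤ C) :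
    ∃ hhat : (ℕ → Fin ℓ) → X → ℝ,
      (∀ (γ : ℕ → Fin ℓ) (x : X),
        Filter.Tendsto
          (fun n => h (seqComp φ γ n x) / ∏ m ∈ Finset.range n, d (γ m))
          Filter.atTop (nhds (hhat γ x))) ∧
      (∀ (γ : ℕ → Fin ℓ) (x : X),
        hhat (fun m => γ (m + 1)) (φ (γ 0) x) = d (γ 0) * hhat γ x) ∧
      (∀ (γ : ℕ → Fin ℓ) (x : X),
        |hhat γ x - h x| ≤
          C / (1 - 1 /
            Finset.univ.inf' (Finset.univ_nonempty_iff.mpr (Fin.pos_iff_nonempty.mp hl)) d)) :=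
  canonical_height_for_infinite_words_general h hl φ d hd C hcomp
end

section
/- Let k be a number field and let φ be an endomorphism of ℙ^N of degree d ≥ 1 defined over k, i.e., φ is given by N+1 homogeneous polynomials F_0,…,F_N of degree d in k[X_0,…,X_N] having no common zero other than the origin over an algebraic closure of k. Then there exists a constant C ≥ 0 such that |h(φ(P)) − d·h(P)| ≤ C for all P ∈ ℙ^N(k). -/
/-!
Write `h(P) = ∑_v log max_j |a_j|_v`. Away from the archimedean places and the finitely many
places where some coefficient is not a unit, the ultrametric inequality gives
`max_j |F_j(a)|_v ≤ (max_j |a_j|_v)^d`; elsewhere the triangle inequality gives the same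
bound up to a constant factor, whence `h(φ P) ≤ d h(P) + C`. For the lower bound, the
Nullstellensatz (the `F_j` have no common zero over `k̄`) yields `X_i^(e+d) = ∑_j q_ij F_j`
with `q_ij` homogeneous of degree `e`; evaluating at `a` and applying the upper bound to the
`q_ij` gives `(e + d) h(P) ≤ e h(P) + h(φ P) + C'`. Both estimates are Mathlib's
`Height.logHeight_eval_le'` and `Height.logHeight_eval_ge'`, once the places of `M` are seen to
form a `Height.AdmissibleAbsValues` family; the only nontrivial point there is that, in
characteristic zero, a place with `|2|_v ≤ 1` is nonarchimedean, so only finitely many places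
are archimedean.
-/

open scoped BigOperators

namespace AbsoluteValue

variable {K : Type*} [Field K]

theorem isNonarchimedean_of_forall_natCast_le_one (v : AbsoluteValue K ℝ)
    (h : ∀ n : ℕ, v n ≤ 1) : IsNonarchimedean v := by
  have : IsUltrametricDist (WithAbs v) :=
    .isUltrametricDist_of_forall_norm_natCast_le_one fun n => h n
  exact fun x y => IsUltrametricDist.isNonarchimedean_norm (WithAbs.toAbs v x) (WithAbs.toAbs v y)

theorem one_lt_apply_two_of_not_forall_natCast_le_one [CharZero K] (v : AbsoluteValue K ℝ)
    (h : ¬ ∀ n : ℕ, v n ≤ 1) : 1 < v 2 := by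
  let f : AbsoluteValue ℚ ℝ := v.comp (Rat.castHom K).injective
  have hf (n : ℕ) : f n = v n := congrArg v (map_natCast (Rat.castHom K) n)
  have := Rat.AbsoluteValue.one_lt_of_not_bounded (f := f) (by simpa only [hf] using h)
    (n₀ := 2) one_lt_two
  rwa [hf, Nat.cast_ofNat] at this

end AbsoluteValue

namespace PlaceFamily

variable {k : Type} [Field k] (M : PlaceFamily k)

theorem av_injective : Function.Injective M.av := fun v w hvw => by
  by_contra hne
  exact M.pairwise_inequiv v w hne ⟨1, one_pos, fun x => by rw [hvw, Real.rpow_one]⟩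

theorem finprod_av_eq_one {x : k} (hx : x ≠ 0) : ∏ᶠ v, M.av v x = 1 := by
  refine Real.eq_one_of_pos_of_log_eq_zero
    (finprod_induction (0 < ·) one_pos (fun _ _ => mul_pos) fun v => (M.av v).pos hx) ?_
  rw [Real.log_finprod fun v => (M.av v).pos hx]
  exact M.product_formula x hx

theorem finite_setOf_not_nonarchAt [CharZero k] : {v | ¬ M.NonarchAt v}.Finite :=
  (M.finite_support 2 two_ne_zero).subset fun v hv =>
    (AbsoluteValue.one_lt_apply_two_of_not_forall_natCast_le_one (M.av v)
      fun h => hv ((M.av v).isNonarchimedean_of_forall_natCast_le_one h)).ne'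

noncomputable def archPlaces [CharZero k] : Finset M.V := M.finite_setOf_not_nonarchAt.toFinset

theorem finprod_comp_av_eq_arch_mul_nonarch [CharZero k] (G : AbsoluteValue k ℝ → ℝ)
    (hG : (fun v => G (M.av v)).HasFiniteMulSupport) :
    ∏ᶠ v, G (M.av v) =
      ((M.archPlaces.val.map M.av).map G).prod * ∏ᶠ w : M.av '' {v | M.NonarchAt v}, G w := by
  have hunion : (M.archPlaces : Set M.V) ∪ {v | M.NonarchAt v} = Set.univ := by
    ext v; simp [archPlaces, em']
  rw [finprod_set_coe_eq_finprod_mem, finprod_mem_image M.av_injective.injOn, Multiset.map_map,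
    Function.comp_def, Finset.prod_map_val, ← finprod_mem_coe_finset,
    ← finprod_mem_union' _ (hG.subset Set.inter_subset_right) (hG.subset Set.inter_subset_right),
    hunion, finprod_mem_univ]
  exact Set.disjoint_left.2 fun v hv hv' => by simp_all [archPlaces]

/-- Each archimedean place is counted once; since `M.av` is injective, the nonarchimedean places
can be recorded as a set of absolute values. -/
noncomputable abbrev admissibleAbsValues [CharZero k] : Height.AdmissibleAbsValues k where
  archAbsVal := M.archPlaces.val.map M.av
  nonarchAbsVal := M.av '' {v | M.NonarchAt v}
  isNonarchimedean := by
    rintro _ ⟨v, hv, rfl⟩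
    exact hv
  hasFiniteMulSupport hx :=
    ((M.finite_support _ hx).image M.av).preimage Subtype.val_injective.injOn |>.subset
      fun ⟨_, v, _, rfl⟩ hv => ⟨v, hv, rfl⟩
  product_formula hx := by
    rw [← M.finprod_comp_av_eq_arch_mul_nonarch (· _) (M.finite_support _ hx),
      M.finprod_av_eq_one hx]

variable {N : ℕ}

theorem maxAbs_eq_iSup (v : M.V) (a : Fin (N + 1) → k) : M.maxAbs v a = ⨆ i, M.av v (a i) :=
  Finset.sup'_univ_eq_ciSup _

theorem le_maxAbs (v : M.V) (a : Fin (N + 1) → k) (i : Fin (N + 1)) :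
    M.av v (a i) ≤ M.maxAbs v a :=
  Finset.le_sup' (fun j => M.av v (a j)) (Finset.mem_univ i)

theorem maxAbs_zero (v : M.V) : M.maxAbs v (0 : Fin (N + 1) → k) = 0 := by
  simp only [maxAbs, Pi.zero_apply, map_zero]
  exact Finset.sup'_const _ _

theorem maxAbs_pos (v : M.V) {a : Fin (N + 1) → k} (ha : a ≠ 0) : 0 < M.maxAbs v a := by
  obtain ⟨i, hi⟩ := Function.ne_iff.1 ha
  exact ((M.av v).pos hi).trans_le (M.le_maxAbs v a i)

/-- If `|a_i|_v = 1` for every nonzero coordinate `a_i`, then `max_i |a_i|_v = 1`. -/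
theorem hasFiniteMulSupport_maxAbs {a : Fin (N + 1) → k} (ha : a ≠ 0) :
    (fun v => M.maxAbs v a).HasFiniteMulSupport := by
  refine (Set.toFinite {i | a i ≠ 0}).biUnion (fun i hi => M.finite_support (a i) hi) |>.subset ?_
  intro v hv
  by_contra hout
  simp only [Set.mem_iUnion, Set.mem_ofPred_eq, not_exists, not_not] at hout
  obtain ⟨i, hi⟩ := Function.ne_iff.1 ha
  refine hv (le_antisymm (Finset.sup'_le _ _ fun j _ => ?_)
    ((hout i hi).ge.trans (M.le_maxAbs v a i)))
  rcases eq_or_ne (a j) 0 with h | h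
  · simp [h]
  · exact (hout j h).le

theorem height_eq_logHeight [CharZero k] (a : Fin (N + 1) → k) :
    letI := M.admissibleAbsValues
    M.height a = Height.logHeight a := by
  let := M.admissibleAbsValues
  rcases eq_or_ne a 0 with rfl | ha
  · simp [height, maxAbs_zero]
  rw [Height.logHeight_eq_log_mulHeight, Height.mulHeight_eq ha]
  change _ = Real.log (((M.archPlaces.val.map M.av).map _).prod *
    ∏ᶠ w : M.av '' {v | M.NonarchAt v}, _)
  rw [← M.finprod_comp_av_eq_arch_mul_nonarch (fun w => ⨆ i, w (a i)) ?_] <;>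
    simp only [← maxAbs_eq_iSup]
  · rw [height, Real.log_finprod fun v => M.maxAbs_pos v ha]
  · exact M.hasFiniteMulSupport_maxAbs ha

end PlaceFamily

namespace MvPolynomial

variable {σ R : Type*} [CommSemiring R]

attribute [local instance] MvPolynomial.gradedAlgebra in
theorem homogeneousComponent_add_mul_of_isHomogeneous {F : MvPolynomial σ R} {d : ℕ}
    (hF : F.IsHomogeneous d) (G : MvPolynomial σ R) (e : ℕ) :
    homogeneousComponent (e + d) (G * F) = homogeneousComponent e G * F := by
  have := DirectSum.coe_decompose_mul_of_right_mem (homogeneousSubmodule σ R) (a := G) (e + d)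
    ((mem_homogeneousSubmodule d F).2 hF)
  rw [if_pos (Nat.le_add_left d e), Nat.add_sub_cancel] at this
  rwa [← decomposition.decompose'_apply, ← decomposition.decompose'_apply]

theorem exists_isHomogeneous_sum_mul_eq_of_mem_span {ι : Type*} [Fintype ι]
    {F : ι → MvPolynomial σ R} {d : ℕ} (hF : ∀ i, (F i).IsHomogeneous d) {e : ℕ}
    {p : MvPolynomial σ R} (hp : p.IsHomogeneous (e + d)) (hmem : p ∈ Ideal.span (Set.range F)) :
    ∃ q : ι → MvPolynomial σ R, (∀ i, (q i).IsHomogeneous e) ∧ ∑ i, q i * F i = p := by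
  obtain ⟨c, hc⟩ := (Submodule.mem_span_range_iff_exists_fun _).1 hmem
  refine ⟨fun i => homogeneousComponent e (c i),
    fun i => homogeneousComponent_isHomogeneous _ _, ?_⟩
  rw [← homogeneousComponent_eq_self hp, ← hc, map_sum]
  simp only [smul_eq_mul, homogeneousComponent_add_mul_of_isHomogeneous (hF _)]

end MvPolynomial

namespace ProjEndo

open MvPolynomial

variable {k : Type} [Field k] {N : ℕ} (φ : ProjEndo k N)

theorem X_mem_radical_span_coord (i : Fin (N + 1)) :
    X i ∈ (Ideal.span (Set.range φ.coord)).radical := by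
  rw [← vanishingIdeal_zeroLocus_eq_radical (K := AlgebraicClosure k), mem_vanishingIdeal_iff]
  intro x hx
  have : x = 0 := φ.no_common_zero x fun j => by
    rw [← eval₂_eq_eval_map]
    exact mem_zeroLocus_iff.1 hx _ (Ideal.subset_span ⟨j, rfl⟩)
  simp [this]

theorem exists_isHomogeneous_sum_mul_coord_eq_X_pow :
    ∃ (e : ℕ) (q : Fin (N + 1) × Fin (N + 1) → MvPolynomial (Fin (N + 1)) k),
      (∀ ij, (q ij).IsHomogeneous e) ∧
        ∀ i, ∑ j, q (i, j) * φ.coord j = X i ^ (e + φ.deg) := by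
  obtain ⟨e, he⟩ := Ideal.exists_pow_le_of_le_radical_of_fg
    (Ideal.span_le.2 (Set.range_subset_iff.2 φ.X_mem_radical_span_coord))
    (Submodule.fg_span (Set.finite_range X))
  have hpow (i : Fin (N + 1)) : X i ^ (e + φ.deg) ∈ Ideal.span (Set.range φ.coord) := by
    rw [pow_add]
    exact Ideal.mul_mem_right _ _
      (he (Ideal.pow_mem_pow (Ideal.subset_span (Set.mem_range_self i)) e))
  choose q hq using fun i =>
    exists_isHomogeneous_sum_mul_eq_of_mem_span φ.homogeneous (isHomogeneous_X_pow i _) (hpow i)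
  exact ⟨e, fun ij => q ij.1 ij.2, fun ij => (hq ij.1).1 ij.2, fun i => (hq i).2⟩

end ProjEndo

theorem height_functoriality_endomorphism_general
    {k : Type} [Field k] [NumberField k] (M : PlaceFamily k)
    {N : ℕ} (φ : ProjEndo k N) :
    ∃ C : ℝ, 0 ≤ C ∧ ∀ a : Fin (N + 1) → k, a ≠ 0 →
      |M.height (φ.app a) - (φ.deg : ℝ) * M.height a| ≤ C := by
  let := M.admissibleAbsValues
  obtain ⟨e, q, hq, hqφ⟩ := φ.exists_isHomogeneous_sum_mul_coord_eq_X_pow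
  obtain ⟨C₁, hC₁⟩ := Height.logHeight_eval_le' φ.homogeneous
  obtain ⟨C₂, hC₂⟩ := Height.logHeight_eval_ge' (N := φ.deg) hq
  refine ⟨|C₁| + |C₂|, by positivity, fun a _ => ?_⟩
  have hupper : Height.logHeight (φ.app a) ≤ C₁ + φ.deg * Height.logHeight a := hC₁ a
  have hlower : C₂ + φ.deg * Height.logHeight a ≤ Height.logHeight (φ.app a) :=
    hC₂ φ.coord fun i => by simpa using congrArg (MvPolynomial.eval a) (hqφ i)
  rw [M.height_eq_logHeight, M.height_eq_logHeight, abs_le]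
  constructor <;> linarith [le_abs_self C₁, neg_abs_le C₂, abs_nonneg C₁, abs_nonneg C₂]

/-- **Height functoriality for endomorphisms of `ℙ^N`.**
Let `k` be a number field and `φ` an endomorphism of `ℙ^N` of degree `d ≥ 1` defined
over `k` (given by `N + 1` homogeneous polynomials of degree `d` with no common
nontrivial zero over an algebraic closure of `k`).  Then there is a constant `C ≥ 0`
with `|h(φ(P)) − d·h(P)| ≤ C` for all `P ∈ ℙ^N(k)`. -/
theorem height_functoriality_endomorphism
    {k : Type} [Field k] [NumberField k] (M : PlaceFamily k)
    {N : ℕ} (φ : ProjEndo k N) (hd : 1 ≤ φ.deg) :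
    ∃ C : ℝ, 0 ≤ C ∧ ∀ a : Fin (N + 1) → k, a ≠ 0 →
      |M.height (φ.app a) - (φ.deg : ℝ) * M.height a| ≤ C :=
  height_functoriality_endomorphism_general M φ
end
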